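/- (Matching lower bound for nearest-neighbor moments.) Suppose each X_i has marginal law μ and μ(B(x,r)) ≤ c_+ r^s for all 0 < r ≤ r_0. Let r^- = (k/(2 c_+ n))^{1/s} and assume r^- ≤ r_0. Then P(R_{n,k}(x) > r^-) ≥ 1/2, and consequently for every p > 0, E[R_{n,k}(x)^p] ≥ (1/2) (k/(2 c_+ n))^{p/s}. -/

import Mathlib

open Metric MeasureTheory
open scoped ENNReal

/-- The `k`-th nearest-neighbor radius of the query point `x`. -/
noncomputable def kNNdist {d n : ℕ} (x : EuclideanSpace ℝ (Fin d))
    (X : Fin n → EuclideanSpace ℝ (Fin d)) (k : ℕ) : ℝ :=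
  sInf {r : ℝ | k ≤ (Finset.univ.filter fun i => dist (X i) x ≤ r).card}

/-!
Let `N` count the sample points in the closed ball of radius `r⁻` about `x`. Linearity of
expectation needs no independence: `E N = n μ(B(x, r⁻)) ≤ n c₊ (r⁻)ˢ = k / 2`, so Markov's
inequality gives `P(N ≥ k) ≤ 1/2`. On the event `N < k` the `k`-th nearest-neighbor distance
exceeds `r⁻`, which is the tail bound; integrating `(r⁻)ᵖ` over that event gives the moment bound.
-/

lemma lt_kNNdist_of_card_lt {d n : ℕ} (x : EuclideanSpace ℝ (Fin d))
    (Y : Fin n → EuclideanSpace ℝ (Fin d)) {k : ℕ} (hkn : k ≤ n) {r : ℝ}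
    (h : (Finset.univ.filter fun i => dist (Y i) x ≤ r).card < k) :
    r < kNNdist x Y k := by
  set D : ℝ → Finset (Fin n) := fun t => Finset.univ.filter fun i => dist (Y i) x ≤ t
  have between : ∀ b, k ≤ (D b).card → ∃ i, r < dist (Y i) x ∧ dist (Y i) x ≤ b := by
    intro b hb
    obtain ⟨i, hib, hir⟩ := Finset.exists_mem_notMem_of_card_lt_card (h.trans_le hb)
    exact ⟨i, lt_of_not_ge fun hi => hir (by simpa [D] using hi), by simpa [D] using hib⟩
  obtain ⟨M, hM⟩ := (Set.finite_range fun i => dist (Y i) x).bddAbove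
  have hDM : k ≤ (D M).card := by
    rw [show D M = Finset.univ from Finset.filter_true_of_mem fun i _ => hM ⟨i, rfl⟩]
    simpa using hkn
  obtain ⟨i₀, hi₀r, -⟩ := between M hDM
  -- the smallest distance exceeding `r` is a lower bound of the set defining `kNNdist`
  obtain ⟨j, hjr, hjmin⟩ := (Finset.univ.filter fun i => r < dist (Y i) x).exists_min_image
    (fun i => dist (Y i) x) ⟨i₀, by simpa using hi₀r⟩
  refine (Finset.mem_filter.1 hjr).2.trans_le (le_csInf ⟨M, hDM⟩ fun b hb => ?_)
  obtain ⟨i, hir, hib⟩ := between b hb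
  exact (hjmin i (by simpa using hir)).trans hib

lemma mul_measure_le_lintegral_of_le {α : Type*} [MeasurableSpace α] {μ : Measure α}
    {s : Set α} (hs : MeasurableSet s) {c : ℝ≥0∞} {f : α → ℝ≥0∞} (hf : ∀ x ∈ s, c ≤ f x) :
    c * μ s ≤ ∫⁻ x, f x ∂μ :=
  calc c * μ s = ∫⁻ _ in s, c ∂μ := (setLIntegral_const s c).symm
    _ ≤ ∫⁻ x in s, f x ∂μ := setLIntegral_mono' hs hf
    _ ≤ ∫⁻ x, f x ∂μ := setLIntegral_le_lintegral s f

lemma natCast_mul_le_div_two {m : ℝ≥0∞} {n k : ℕ} (hn : n ≠ 0)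
    (h : m ≤ ENNReal.ofReal (k / (2 * n))) : n * m ≤ k / 2 :=
  calc n * m ≤ n * ENNReal.ofReal (k / (2 * n)) := by gcongr
    _ = k / 2 := by
      have hn' : (n : ℝ) ≠ 0 := by exact_mod_cast hn
      rw [← ENNReal.ofReal_natCast n, ← ENNReal.ofReal_mul n.cast_nonneg,
        show (n : ℝ) * (k / (2 * n)) = k / 2 by field_simp, ENNReal.ofReal_div_of_pos two_pos]
      simp

section Counting

variable {ι Ω α : Type*} [Fintype ι] [MeasurableSpace Ω] [MeasurableSpace α]
  {P : Measure Ω} {μ : Measure α} {X : ι → Ω → α} {B : Set α} [DecidablePred (· ∈ B)]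

lemma measurable_card_mem (hX : ∀ i, Measurable (X i)) (hB : MeasurableSet B) :
    Measurable fun ω => ((Finset.univ.filter fun i => X i ω ∈ B).card : ℝ≥0∞) := by
  simp only [Finset.natCast_card_filter]
  exact Finset.measurable_sum _ fun i _ =>
    Measurable.ite (hX i hB) measurable_const measurable_const

lemma measurableSet_card_mem_lt (hX : ∀ i, Measurable (X i)) (hB : MeasurableSet B) (k : ℕ) :
    MeasurableSet {ω | (Finset.univ.filter fun i => X i ω ∈ B).card < k} := by
  simpa only [Nat.cast_lt] using
    measurableSet_lt (measurable_card_mem hX hB) (measurable_const (a := (k : ℝ≥0∞)))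

lemma lintegral_card_mem (hX : ∀ i, Measurable (X i)) (hlaw : ∀ i, P.map (X i) = μ)
    (hB : MeasurableSet B) :
    ∫⁻ ω, ((Finset.univ.filter fun i => X i ω ∈ B).card : ℝ≥0∞) ∂P
      = Fintype.card ι * μ B := by
  simp only [Finset.natCast_card_filter]
  rw [lintegral_finsetSum _ fun i _ =>
    Measurable.ite (hX i hB) measurable_const measurable_const]
  have hterm : ∀ i, ∫⁻ ω, (if X i ω ∈ B then (1 : ℝ≥0∞) else 0) ∂P = μ B := fun i => by
    rw [← hlaw i, ← lintegral_indicator_one hB,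
      lintegral_map (measurable_one.indicator hB) (hX i)]
    simp [Set.indicator_apply]
  simp [hterm]

lemma half_le_measure_card_mem_lt (hX : ∀ i, Measurable (X i))
    (hlaw : ∀ i, P.map (X i) = μ) [IsProbabilityMeasure P] (hB : MeasurableSet B)
    {k : ℕ} (hk : k ≠ 0) (hμB : Fintype.card ι * μ B ≤ k / 2) :
    1 / 2 ≤ P {ω | (Finset.univ.filter fun i => X i ω ∈ B).card < k} := by
  set N := fun ω => ((Finset.univ.filter fun i => X i ω ∈ B).card : ℝ≥0∞)
  have markov : (k : ℝ≥0∞) * P {ω | k ≤ N ω} ≤ k * (1 / 2) := by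
    calc (k : ℝ≥0∞) * P {ω | k ≤ N ω}
        ≤ ∫⁻ ω, N ω ∂P := mul_meas_ge_le_lintegral₀ (measurable_card_mem hX hB).aemeasurable _
      _ ≤ k * (1 / 2) := by rw [lintegral_card_mem hX hlaw hB, ← div_eq_mul_one_div]; exact hμB
  have hbad : P {ω | k ≤ N ω} ≤ 1 / 2 :=
    (ENNReal.mul_le_mul_iff_right (by exact_mod_cast hk) (ENNReal.natCast_ne_top k)).1 markov
  have hgood : {ω | (Finset.univ.filter fun i => X i ω ∈ B).card < k} = {ω | k ≤ N ω}ᶜ := by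
    ext ω; simp [N]
  rw [hgood, prob_compl_eq_one_sub (measurableSet_le measurable_const (measurable_card_mem hX hB))]
  calc (1 : ℝ≥0∞) / 2 = 1 - 1 / 2 := (ENNReal.sub_half ENNReal.one_ne_top).symm
    _ ≤ 1 - P {ω | k ≤ N ω} := tsub_le_tsub_left hbad 1

end Counting

theorem stmt3_general {d n : ℕ} {Ω : Type*} [MeasurableSpace Ω]
    (P : Measure Ω) [IsProbabilityMeasure P]
    (X : Fin n → Ω → EuclideanSpace ℝ (Fin d)) (hXm : ∀ i, Measurable (X i))
    (μ : Measure (EuclideanSpace ℝ (Fin d))) (hlaw : ∀ i, P.map (X i) = μ)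
    (x : EuclideanSpace ℝ (Fin d)) (cp r0 s : ℝ)
    (hcp : 0 < cp) (hs : 0 < s)
    (hmass : ∀ r : ℝ, 0 < r → r ≤ r0 →
      μ (closedBall x r) ≤ ENNReal.ofReal (cp * r ^ s))
    (k : ℕ) (hk1 : 1 ≤ k) (hkn : k ≤ n)
    (hrange : ((k : ℝ) / (2 * cp * n)) ^ ((1 : ℝ) / s) ≤ r0) :
    (1 / 2 : ℝ≥0∞) ≤
      P {ω | ((k : ℝ) / (2 * cp * n)) ^ ((1 : ℝ) / s) < kNNdist x (fun i => X i ω) k} ∧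
    ∀ p : ℝ, 0 < p →
      ENNReal.ofReal ((1 / 2) * ((k : ℝ) / (2 * cp * n)) ^ (p / s)) ≤
        ∫⁻ ω, ENNReal.ofReal (kNNdist x (fun i => X i ω) k ^ p) ∂P := by
  set A : ℝ := k / (2 * cp * n)
  set r : ℝ := A ^ ((1 : ℝ) / s)
  have hn : n ≠ 0 := by omega
  have hA : 0 < A := by
    have : (0 : ℝ) < k := by exact_mod_cast hk1
    positivity
  have hr : 0 < r := Real.rpow_pos_of_pos hA _
  have hcpr : cp * r ^ s = k / (2 * n) := by
    rw [← Real.rpow_mul hA.le, one_div_mul_cancel hs.ne', Real.rpow_one]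
    simp only [A]
    field_simp
  have hball : n * μ {y | dist y x ≤ r} ≤ k / 2 :=
    natCast_mul_le_div_two hn (hcpr ▸ hmass r hr hrange)
  set G := {ω | (Finset.univ.filter fun i => dist (X i ω) x ≤ r).card < k}
  have hGm : MeasurableSet G :=
    measurableSet_card_mem_lt (B := {y | dist y x ≤ r}) hXm measurableSet_closedBall k
  have hG : 1 / 2 ≤ P G :=
    half_le_measure_card_mem_lt (B := {y | dist y x ≤ r}) hXm hlaw
      measurableSet_closedBall (by omega) (by simpa using hball)
  have hGsub : ∀ ω ∈ G, r < kNNdist x (fun i => X i ω) k := fun ω hω =>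
    lt_kNNdist_of_card_lt x _ hkn hω
  refine ⟨hG.trans (measure_mono hGsub), fun p hp => ?_⟩
  have hrp : r ^ p = A ^ (p / s) := by rw [← Real.rpow_mul hA.le, one_div_mul_eq_div]
  calc ENNReal.ofReal (1 / 2 * A ^ (p / s)) = ENNReal.ofReal (r ^ p) * (1 / 2) := by
        rw [hrp, mul_comm, ENNReal.ofReal_mul (by positivity), ENNReal.ofReal_div_of_pos two_pos]
        simp
    _ ≤ ENNReal.ofReal (r ^ p) * P G := by gcongr
    _ ≤ _ := mul_measure_le_lintegral_of_le hGm fun ω hω =>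
        ENNReal.ofReal_le_ofReal (Real.rpow_le_rpow hr.le (hGsub ω hω).le hp.le)

/-- matching lower bound for nearest-neighbor moments:
under the local upper-mass condition `μ(B(x,r)) ≤ c₊ rˢ` for `0 < r ≤ r₀`, with
`r⁻ = (k/(2c₊n))^{1/s} ≤ r₀`, we have `P(R_{n,k}(x) > r⁻) ≥ 1/2`, and for every
`p > 0`, `E[R_{n,k}(x)^p] ≥ (1/2) (k/(2c₊n))^{p/s}`. -/
theorem stmt3 {d n : ℕ} {Ω : Type*} [MeasurableSpace Ω]
    (P : Measure Ω) [IsProbabilityMeasure P]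
    (X : Fin n → Ω → EuclideanSpace ℝ (Fin d)) (hXm : ∀ i, Measurable (X i))
    (μ : Measure (EuclideanSpace ℝ (Fin d))) (hlaw : ∀ i, P.map (X i) = μ)
    (x : EuclideanSpace ℝ (Fin d)) (cp r0 s : ℝ)
    (hcp : 0 < cp) (hr0 : 0 < r0) (hs : 0 < s)
    (hmass : ∀ r : ℝ, 0 < r → r ≤ r0 →
      μ (closedBall x r) ≤ ENNReal.ofReal (cp * r ^ s))
    (k : ℕ) (hk1 : 1 ≤ k) (hkn : k ≤ n)
    (hrange : ((k : ℝ) / (2 * cp * n)) ^ ((1 : ℝ) / s) ≤ r0) :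
    (1 / 2 : ℝ≥0∞) ≤
      P {ω | ((k : ℝ) / (2 * cp * n)) ^ ((1 : ℝ) / s) < kNNdist x (fun i => X i ω) k} ∧
    ∀ p : ℝ, 0 < p →
      ENNReal.ofReal ((1 / 2) * ((k : ℝ) / (2 * cp * n)) ^ (p / s)) ≤
        ∫⁻ ω, ENNReal.ofReal (kNNdist x (fun i => X i ω) k ^ p) ∂P :=
  stmt3_general P X hXm μ hlaw x cp r0 s hcp hs hmass k hk1 hkn hrange
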